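/- arXiv:2101.02610 — 2 statements merged into one kernel-verified Lean document; each statement's English description precedes it below -/
import Mathlib

section
/- Let (X, d, T) be a topological dynamical system, μ ∈ E_T(X), δ ∈ (0,1), ε > 0 and c ≥ 0. If for μ-a.e. x ∈ X one has limsup_{n→∞} −(1/n) log μ(B_n(x,ε)) ≤ c, then h_μ^K(3ε, δ) ≤ c. In particular, the Katok entropy h_μ^K(3ε, δ) is bounded above by the Brin–Katok local entropy h_μ^{BK}(ε) (the μ-a.e. constant value of x ↦ limsup_{n→∞} −(1/n) log μ(B_n(x,ε))). -/
/-!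
Fix `s > c`. For a.e. `x`, eventually `μ (B_n(x, ε)) ≥ e^{-sn}`, so by continuity of `μ` from
below there are `N` and a set `A` with `μ A > δ` on which this holds for every `n ≥ N`. For such
`n`, points of `A` with pairwise disjoint `ε`-balls number at most `e^{sn}`, and a maximal family
of them has `2ε`-balls covering `A`. Hence `N_μ^δ(n, 3ε) ≤ e^{sn}` for `n ≥ N`, and so
`h_μ^K(3ε, δ) ≤ s`.
-/

open Filter MeasureTheory Set Topology

variable {X : Type*}

/-- The dynamical (Bowen) metric `d_n(x,y) = max_{0 ≤ k ≤ n-1} d(T^k x, T^k y)`. -/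
noncomputable def dynDist [MetricSpace X] (T : X → X) (n : ℕ) (x y : X) : ℝ :=
  ⨆ k ∈ Finset.range n, dist (T^[k] x) (T^[k] y)

/-- The open dynamical ball `B_n(x, ε) = {y : d_n(x,y) < ε}`. -/
def dynBall [MetricSpace X] (T : X → X) (n : ℕ) (x : X) (ε : ℝ) : Set X :=
  {y | dynDist T n x y < ε}

/-- `s_n(K, ε)`: the maximal cardinality of an `(n,ε)`-separated subset of `K`. -/
noncomputable def sepNum [MetricSpace X] (T : X → X) (n : ℕ) (K : Set X) (ε : ℝ) : ℕ :=
  sSup {m | ∃ E : Finset X, ↑E ⊆ K ∧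
    (∀ x ∈ E, ∀ y ∈ E, x ≠ y → ε < dynDist T n x y) ∧ E.card = m}

/-- `S(K, ε) = limsup_n (1/n) log s_n(K, ε)`. -/
noncomputable def sepEnt [MetricSpace X] (T : X → X) (K : Set X) (ε : ℝ) : EReal :=
  limsup (fun n : ℕ => ((Real.log (sepNum T n K ε) / n : ℝ) : EReal)) atTop

/-- `r_n(K, ε)`: the minimal cardinality of an `(n,ε)`-spanning set for `K`. -/
noncomputable def spanNum [MetricSpace X] (T : X → X) (n : ℕ) (K : Set X) (ε : ℝ) : ℕ :=
  sInf {m | ∃ F : Finset X, (∀ x ∈ K, ∃ y ∈ F, dynDist T n x y ≤ ε) ∧ F.card = m}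

/-- `R(K, ε) = limsup_n (1/n) log r_n(K, ε)`. -/
noncomputable def spanEnt [MetricSpace X] (T : X → X) (K : Set X) (ε : ℝ) : EReal :=
  limsup (fun n : ℕ => ((Real.log (spanNum T n K ε) / n : ℝ) : EReal)) atTop

/-- Upper metric mean dimension. -/
noncomputable def mdimUpper [MetricSpace X] (T : X → X) : EReal :=
  limsup (fun ε : ℝ => sepEnt T univ ε / ((Real.log (1 / ε) : ℝ) : EReal)) (𝓝[>] (0:ℝ))

/-- Lower metric mean dimension. -/
noncomputable def mdimLower [MetricSpace X] (T : X → X) : EReal :=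
  liminf (fun ε : ℝ => sepEnt T univ ε / ((Real.log (1 / ε) : ℝ) : EReal)) (𝓝[>] (0:ℝ))

/-- The ergodic `T`-invariant Borel probability measures. -/
def ergodicMeasures [MeasurableSpace X] (T : X → X) : Set (Measure X) :=
  {μ | IsProbabilityMeasure μ ∧ Ergodic T μ}

/-- `U` is a finite open cover of `X`. -/
def IsFiniteOpenCover [TopologicalSpace X] (U : Finset (Set X)) : Prop :=
  (∀ V ∈ U, IsOpen V) ∧ ⋃₀ (U : Set (Set X)) = univ

/-- The cover `U^n = ⋁_{i=0}^{n-1} T^{-i} U`. -/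
def dynRefine (T : X → X) (U : Finset (Set X)) (n : ℕ) : Set (Set X) :=
  {V | ∃ f : Fin n → Set X, (∀ i, f i ∈ U) ∧ V = ⋂ i : Fin n, T^[(i : ℕ)] ⁻¹' f i}

/-- `N(C)`: the minimal cardinality of a subcover of `C`. -/
noncomputable def coverNum (C : Set (Set X)) : ℕ :=
  sInf {m | ∃ F : Finset (Set X), ↑F ⊆ C ∧ ⋃₀ (F : Set (Set X)) = univ ∧ F.card = m}

/-- `N_μ(U^n, δ)`: minimal number of members of `U^n` needed to cover a set of measure ≥ δ. -/
noncomputable def shapiraNum [MeasurableSpace X] (T : X → X) (μ : Measure X)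
    (U : Finset (Set X)) (n : ℕ) (δ : ℝ) : ℕ :=
  sInf {m | ∃ F : Finset (Set X), ↑F ⊆ dynRefine T U n ∧
    ENNReal.ofReal δ ≤ μ (⋃₀ (F : Set (Set X))) ∧ F.card = m}

/-- Shapira's entropy `h_μ^S(U, δ) = limsup_n (1/n) log N_μ(U^n, δ)`. -/
noncomputable def shapiraEnt [MeasurableSpace X] (T : X → X) (μ : Measure X)
    (U : Finset (Set X)) (δ : ℝ) : EReal :=
  limsup (fun n : ℕ => ((Real.log (shapiraNum T μ U n δ) / n : ℝ) : EReal)) atTop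

/-- `N_μ^δ(n, ε)`: smallest number of open `(n,ε)`-dynamical balls whose union has
measure `> δ`. -/
noncomputable def katokNum [MetricSpace X] [MeasurableSpace X] (T : X → X) (μ : Measure X)
    (n : ℕ) (ε δ : ℝ) : ℕ :=
  sInf {m | ∃ F : Finset X, ENNReal.ofReal δ < μ (⋃ x ∈ F, dynBall T n x ε) ∧ F.card = m}

/-- Katok's entropy `h_μ^K(ε, δ) = limsup_n (1/n) log N_μ^δ(n, ε)`. -/
noncomputable def katokEnt [MetricSpace X] [MeasurableSpace X] (T : X → X) (μ : Measure X)
    (ε δ : ℝ) : EReal :=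
  limsup (fun n : ℕ => ((Real.log (katokNum T μ n ε δ) / n : ℝ) : EReal)) atTop

/-- Lower Katok entropy `h̲_μ^K(ε, δ) = liminf_n (1/n) log N_μ^δ(n, ε)`. -/
noncomputable def katokEntLower [MetricSpace X] [MeasurableSpace X] (T : X → X) (μ : Measure X)
    (ε δ : ℝ) : EReal :=
  liminf (fun n : ℕ => ((Real.log (katokNum T μ n ε δ) / n : ℝ) : EReal)) atTop

/-- `Ñ_μ^δ(n, ε)`: smallest number of sets of `d_n`-diameter ≤ ε whose union has
measure `> δ`. -/
noncomputable def katokNumTilde [MetricSpace X] [MeasurableSpace X] (T : X → X) (μ : Measure X)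
    (n : ℕ) (ε δ : ℝ) : ℕ :=
  sInf {m | ∃ F : Finset (Set X), (∀ A ∈ F, ∀ x ∈ A, ∀ y ∈ A, dynDist T n x y ≤ ε) ∧
    ENNReal.ofReal δ < μ (⋃₀ (F : Set (Set X))) ∧ F.card = m}

/-- Brin–Katok local entropy `h_μ^{BK}(x, ε) = limsup_n -(1/n) log μ(B_n(x, ε))`. -/
noncomputable def brinKatok [MetricSpace X] [MeasurableSpace X] (T : X → X) (μ : Measure X)
    (x : X) (ε : ℝ) : EReal :=
  limsup (fun n : ℕ => -(ENNReal.log (μ (dynBall T n x ε))) / (n : EReal)) atTop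

/-- Lower Brin–Katok local entropy `h̲_μ^{BK}(x, ε) = liminf_n -(1/n) log μ(B_n(x, ε))`. -/
noncomputable def brinKatokLower [MetricSpace X] [MeasurableSpace X] (T : X → X) (μ : Measure X)
    (x : X) (ε : ℝ) : EReal :=
  liminf (fun n : ℕ => -(ENNReal.log (μ (dynBall T n x ε))) / (n : EReal)) atTop

/-- Local entropy function `h_d(x, ε) = inf { S(K, ε) : K closed neighborhood of x }`. -/
noncomputable def locEnt [MetricSpace X] (T : X → X) (x : X) (ε : ℝ) : EReal :=
  ⨅ K ∈ {K : Set X | IsClosed K ∧ K ∈ 𝓝 x}, sepEnt T K ε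

/-- Local spanning entropy `h̃_d(x, ε) = inf { R(K, ε) : K closed neighborhood of x }`. -/
noncomputable def locSpanEnt [MetricSpace X] (T : X → X) (x : X) (ε : ℝ) : EReal :=
  ⨅ K ∈ {K : Set X | IsClosed K ∧ K ∈ 𝓝 x}, spanEnt T K ε

/-- `U_x^n`: the union of all cells of `U^n` containing `x`. -/
def dynCoverCell (T : X → X) (U : Finset (Set X)) (n : ℕ) (x : X) : Set X :=
  ⋃₀ {V | V ∈ dynRefine T U n ∧ x ∈ V}

open scoped ENNReal

theorem Finset.exists_pairwiseDisjoint_maximal {α β : Type*} {A : Set α} {B : α → Set β} {M : ℕ}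
    (hM : ∀ E : Finset α, ↑E ⊆ A → (E : Set α).PairwiseDisjoint B → E.card ≤ M) :
    ∃ E : Finset α, ↑E ⊆ A ∧ (E : Set α).PairwiseDisjoint B ∧
      ∀ y ∈ A, y ∉ E → ∃ x ∈ E, ¬Disjoint (B x) (B y) := by
  classical
  set S := {m | ∃ E : Finset α, ↑E ⊆ A ∧ (E : Set α).PairwiseDisjoint B ∧ E.card = m}
  have hbdd : BddAbove S := ⟨M, by rintro _ ⟨E, hEA, hE, rfl⟩; exact hM E hEA hE⟩
  obtain ⟨E, hEA, hE, hcard⟩ := Nat.sSup_mem (s := S) ⟨0, ∅, by simp, by simp, rfl⟩ hbdd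
  refine ⟨E, hEA, hE, fun y hy hyE => ?_⟩
  by_contra! hdisj
  have hinsert : (insert y E).card ∈ S := by
    refine ⟨insert y E, ?_, ?_, rfl⟩
    · rw [coe_insert]; exact Set.insert_subset hy hEA
    · rw [coe_insert]; exact hE.insert fun x hx _ => (hdisj x hx).symm
  have hle := le_csSup hbdd hinsert
  rw [card_insert_of_notMem hyE, hcard] at hle
  omega

section Measure

variable {α ι : Type*} [MeasurableSpace α] {μ : Measure α}

theorem Finset.card_le_exp_of_pairwiseDisjoint [IsProbabilityMeasure μ] {B : ι → Set α}
    {E : Finset ι} (hE : (E : Set ι).PairwiseDisjoint B) (hB : ∀ i ∈ E, MeasurableSet (B i))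
    {t : ℝ} (ht : ∀ i ∈ E, ENNReal.ofReal (Real.exp (-t)) ≤ μ (B i)) :
    (E.card : ℝ) ≤ Real.exp t := by
  have hmass : ENNReal.ofReal (E.card * Real.exp (-t)) ≤ 1 :=
    calc ENNReal.ofReal (E.card * Real.exp (-t))
        = E.card • ENNReal.ofReal (Real.exp (-t)) := by
          rw [ENNReal.ofReal_mul (by positivity), ENNReal.ofReal_natCast, nsmul_eq_mul]
      _ ≤ ∑ i ∈ E, μ (B i) := E.card_nsmul_le_sum _ _ ht
      _ = μ (⋃ i ∈ E, B i) := (measure_biUnion_finset hE hB).symm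
      _ ≤ 1 := prob_le_one
  calc (E.card : ℝ) = E.card * Real.exp (-t) * Real.exp t := by
        rw [mul_assoc, ← Real.exp_add, neg_add_cancel, Real.exp_zero, mul_one]
    _ ≤ 1 * Real.exp t := by gcongr; exact ENNReal.ofReal_le_one.1 hmass
    _ = Real.exp t := one_mul _

theorem exists_lt_measure_setOf_forall_ge {P : α → ℕ → Prop}
    (h : ∀ᵐ x ∂μ, ∀ᶠ n in atTop, P x n) {r : ℝ≥0∞} (hr : r < μ univ) :
    ∃ N, r < μ {x | ∀ n ≥ N, P x n} := by
  have hmono : Monotone fun N => {x | ∀ n ≥ N, P x n} :=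
    fun N M hNM x hx n hn => hx n (hNM.trans hn)
  have hunion : μ univ ≤ μ (⋃ N, {x | ∀ n ≥ N, P x n}) :=
    measure_mono_ae (h.mono fun x hx _ => mem_iUnion.2 (eventually_atTop.1 hx))
  exact ((tendsto_measure_iUnion_atTop hmono).eventually
    (eventually_gt_nhds (hr.trans_le hunion))).exists

end Measure

theorem eventually_ofReal_exp_le_of_limsup_neg_log_div_lt {u : ℕ → ℝ≥0∞} {s : ℝ}
    (h : limsup (fun n : ℕ => -ENNReal.log (u n) / (n : EReal)) atTop < s) :
    ∀ᶠ n : ℕ in atTop, ENNReal.ofReal (Real.exp (-(s * n))) ≤ u n := by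
  filter_upwards [eventually_lt_of_limsup_lt h, eventually_gt_atTop 0] with n hn hn0
  have hle := hn.le
  rw [EReal.div_le_iff_le_mul (by exact_mod_cast hn0) (EReal.natCast_ne_top n)] at hle
  rw [← ENNReal.exp_log (u n), ← EReal.exp_coe]
  refine EReal.exp_monotone (le_of_eq_of_le ?_ (EReal.neg_le_of_neg_le hle))
  rw [mul_comm, EReal.coe_neg, EReal.coe_mul, EReal.coe_natCast]

theorem limsup_log_div_le {u : ℕ → ℕ} {s : ℝ}
    (h : ∀ᶠ n : ℕ in atTop, 0 < u n ∧ (u n : ℝ) ≤ Real.exp (s * n)) :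
    limsup (fun n : ℕ => ((Real.log (u n) / n : ℝ) : EReal)) atTop ≤ s := by
  refine limsup_le_of_le (by isBoundedDefault) ?_
  filter_upwards [h, eventually_gt_atTop 0] with n ⟨hpos, hle⟩ hn
  have hlog : Real.log (u n) ≤ s * n := (Real.log_le_iff_le_exp (by exact_mod_cast hpos)).2 hle
  exact EReal.coe_le_coe_iff.2 ((div_le_iff₀ (by exact_mod_cast hn)).2 hlog)

section DynamicalMetric

variable [MetricSpace X] {T : X → X} {n : ℕ} {x y : X} {ε r : ℝ}

/-- `(x, T x, …, T^{n-1} x)`, an isometry from `(X, d_n)` into the sup-metric space `Fin n → X`. -/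
def orbitSegment (T : X → X) (n : ℕ) (x : X) : Fin n → X := fun k => T^[k] x

theorem continuous_orbitSegment (hT : Continuous T) : Continuous (orbitSegment T n) :=
  continuous_pi fun k => hT.iterate k

theorem dynDist_eq_dist_orbitSegment (T : X → X) (n : ℕ) (x y : X) :
    dynDist T n x y = dist (orbitSegment T n x) (orbitSegment T n y) := by
  set D := dist (orbitSegment T n x) (orbitSegment T n y)
  have hle : ∀ k, ⨆ _ : k ∈ Finset.range n, dist (T^[k] x) (T^[k] y) ≤ D := fun k =>
    Real.iSup_le (fun hk => dist_le_pi_dist (orbitSegment T n x) (orbitSegment T n y)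
      ⟨k, Finset.mem_range.1 hk⟩) dist_nonneg
  refine le_antisymm (Real.iSup_le hle dist_nonneg) ((dist_pi_le_iff ?_).2 fun k => ?_)
  · exact Real.iSup_nonneg fun k => Real.iSup_nonneg fun _ => dist_nonneg
  · refine le_ciSup_of_le ⟨D, forall_mem_range.2 hle⟩ k ?_
    rw [ciSup_pos (Finset.mem_range.2 k.isLt)]
    rfl

theorem dynBall_eq_preimage_ball (T : X → X) (n : ℕ) (x : X) (ε : ℝ) :
    dynBall T n x ε = orbitSegment T n ⁻¹' Metric.ball (orbitSegment T n x) ε := by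
  ext y
  simp only [dynBall, mem_ofPred_eq, mem_preimage, Metric.mem_ball,
    dynDist_eq_dist_orbitSegment, dist_comm]

theorem mem_dynBall_self (hε : 0 < ε) : x ∈ dynBall T n x ε := by
  simpa [dynBall_eq_preimage_ball] using hε

theorem isOpen_dynBall (hT : Continuous T) : IsOpen (dynBall T n x ε) := by
  rw [dynBall_eq_preimage_ball]
  exact Metric.isOpen_ball.preimage (continuous_orbitSegment hT)

theorem mem_dynBall_of_not_disjoint (hr : 2 * ε ≤ r)
    (h : ¬Disjoint (dynBall T n x ε) (dynBall T n y ε)) : y ∈ dynBall T n x r := by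
  obtain ⟨z, hxz, hyz⟩ := Set.not_disjoint_iff.1 h
  simp only [dynBall_eq_preimage_ball, mem_preimage, Metric.mem_ball] at hxz hyz ⊢
  linarith [dist_triangle_left (orbitSegment T n y) (orbitSegment T n x) (orbitSegment T n z)]

end DynamicalMetric

section KatokNum

variable [MetricSpace X] [MeasurableSpace X] {T : X → X} {μ : Measure X} {n : ℕ} {r δ : ℝ}
  {F : Finset X}

theorem katokNum_le_card (h : ENNReal.ofReal δ < μ (⋃ x ∈ F, dynBall T n x r)) :
    katokNum T μ n r δ ≤ F.card :=
  Nat.sInf_le ⟨F, h, rfl⟩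

theorem katokNum_pos (h : ENNReal.ofReal δ < μ (⋃ x ∈ F, dynBall T n x r)) :
    0 < katokNum T μ n r δ := by
  refine Nat.pos_of_ne_zero fun h0 => ?_
  rcases Nat.sInf_eq_zero.1 h0 with ⟨G, hG, hcard⟩ | hempty
  · rw [Finset.card_eq_zero] at hcard
    simp [hcard] at hG
  · exact hempty.subset ⟨F, h, rfl⟩

theorem katokNum_le_exp [OpensMeasurableSpace X] [IsProbabilityMeasure μ] (hT : Continuous T)
    {ε : ℝ} (hε : 0 < ε) (hr : 2 * ε ≤ r) {A : Set X} (hA : ENNReal.ofReal δ < μ A) {t : ℝ}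
    (ht : ∀ x ∈ A, ENNReal.ofReal (Real.exp (-t)) ≤ μ (dynBall T n x ε)) :
    0 < katokNum T μ n r δ ∧ (katokNum T μ n r δ : ℝ) ≤ Real.exp t := by
  have hcard : ∀ E : Finset X, ↑E ⊆ A → (E : Set X).PairwiseDisjoint (dynBall T n · ε) →
      (E.card : ℝ) ≤ Real.exp t := fun E hEA hE =>
    E.card_le_exp_of_pairwiseDisjoint hE (fun _ _ => (isOpen_dynBall hT).measurableSet)
      fun x hx => ht x (hEA hx)
  obtain ⟨E, hEA, hE, hmax⟩ := Finset.exists_pairwiseDisjoint_maximal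
    fun E hEA hE => Nat.le_floor (hcard E hEA hE)
  have hcover : A ⊆ ⋃ x ∈ E, dynBall T n x r := by
    intro y hy
    by_cases hyE : y ∈ E
    · exact mem_biUnion hyE (mem_dynBall_self (by linarith))
    · obtain ⟨x, hxE, hxy⟩ := hmax y hy hyE
      exact mem_biUnion hxE (mem_dynBall_of_not_disjoint hr hxy)
  have hμE := hA.trans_le (measure_mono hcover)
  exact ⟨katokNum_pos hμE, (Nat.cast_le.2 (katokNum_le_card hμE)).trans (hcard E hEA hE)⟩

end KatokNum

section Theorems

variable [MetricSpace X] [CompactSpace X] [Nonempty X] [MeasurableSpace X] [BorelSpace X]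

theorem katokEnt_le_of_ae_brinKatok_le_general (T : X → X) (hT : IsHomeomorph T)
    (μ : Measure X) (hμ : μ ∈ ergodicMeasures T)
    (δ : ℝ) (hδ : δ ∈ Set.Ioo (0:ℝ) 1) (ε : ℝ) (hε : 0 < ε)
    (c : ℝ)
    (h : ∀ᵐ x ∂μ, brinKatok T μ x ε ≤ (c : EReal)) :
    katokEnt T μ (3 * ε) δ ≤ (c : EReal) := by
  have := hμ.1
  refine EReal.le_of_forall_lt_iff_le.1 fun s hcs => ?_
  have hball : ∀ᵐ x ∂μ, ∀ᶠ n : ℕ in atTop,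
      ENNReal.ofReal (Real.exp (-(s * n))) ≤ μ (dynBall T n x ε) :=
    h.mono fun x hx => eventually_ofReal_exp_le_of_limsup_neg_log_div_lt (hx.trans_lt hcs)
  obtain ⟨N, hN⟩ := exists_lt_measure_setOf_forall_ge hball
    (by rw [measure_univ]; exact ENNReal.ofReal_lt_one.2 hδ.2)
  exact limsup_log_div_le (eventually_atTop.2 ⟨N, fun n hn =>
    katokNum_le_exp hT.continuous hε (by linarith) hN fun x hx => hx n hn⟩)

/-- Katok's entropy at scale `3ε` is bounded above by any μ-a.e. upper bound `c` on the
Brin-Katok local entropy at scale `ε` (from the proof of Theorem 5.2). -/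
theorem katokEnt_le_of_ae_brinKatok_le (T : X → X) (hT : IsHomeomorph T)
    (μ : Measure X) (hμ : μ ∈ ergodicMeasures T)
    (δ : ℝ) (hδ : δ ∈ Set.Ioo (0:ℝ) 1) (ε : ℝ) (hε : 0 < ε)
    (c : ℝ) (hc : 0 ≤ c)
    (h : ∀ᵐ x ∂μ, brinKatok T μ x ε ≤ (c : EReal)) :
    katokEnt T μ (3 * ε) δ ≤ (c : EReal) :=
  katokEnt_le_of_ae_brinKatok_le_general T hT μ hμ δ hδ ε hε c h

end Theorems
end

section
/- Let (X, d, T) be a topological dynamical system. Then the lower metric mean dimension satisfies mdim̲_M(X,d,T) = liminf_{ε→0} (1/log(1/ε)) · sup_{x ∈ X} h_d(x, ε), where h_d is the local entropy function. -/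
open Filter MeasureTheory Set Topology

variable {X : Type*}

/-!
For every `ε > 0` one has `S(X, ε) = sup_x h_d(x, ε)`, so the two liminfs agree termwise.
The inequality `≥` holds because `X` is a closed neighbourhood of each of its points. For `≤`,
compactness covers `X` by finitely many closed neighbourhoods `K_i` with `S(K_i, ε)` close to
`h_d(x_i, ε)`; an `(n, ε)`-separated subset of `X` splits into separated subsets of the `K_i`, so
`s_n(X, ε) ≤ ∑ᵢ s_n(K_i, ε)`, and the exponential growth rate of a finite sum is the maximum of
the growth rates of its terms.
-/

open scoped ENNReal
open ExpGrowth

lemma ENNReal.log_natCast_div {m : ℕ} (hm : m ≠ 0) (n : ℕ) :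
    ENNReal.log (m : ℝ≥0∞) / (n : EReal) = ((Real.log m / n : ℝ) : EReal) := by
  rw [EReal.coe_div, ← ENNReal.ofReal_natCast, ENNReal.log_ofReal_of_pos (by positivity)]
  rfl

/-- Only an inequality: `ENNReal.log 0 = ⊥` whereas `Real.log 0 = 0`. -/
lemma ENNReal.log_natCast_div_le (m n : ℕ) :
    ENNReal.log (m : ℝ≥0∞) / (n : EReal) ≤ ((Real.log m / n : ℝ) : EReal) := by
  rcases eq_or_ne m 0 with rfl | hm
  · rcases eq_or_ne n 0 with rfl | hn
    · simp [EReal.div_zero]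
    · simp [EReal.bot_div_of_pos_ne_top (by exact_mod_cast Nat.pos_of_ne_zero hn)
        (EReal.natCast_ne_top n)]
  · exact (ENNReal.log_natCast_div hm n).le

section SeparatedSets

variable [MetricSpace X] {T : X → X} {n : ℕ} {ε : ℝ}

def IsDynSeparated (T : X → X) (n : ℕ) (ε : ℝ) (E : Finset X) : Prop :=
  ∀ x ∈ E, ∀ y ∈ E, x ≠ y → ε < dynDist T n x y

lemma dynDist_le_of_forall_dist_le {x y : X} (hε : 0 ≤ ε)
    (h : ∀ k < n, dist (T^[k] x) (T^[k] y) ≤ ε) : dynDist T n x y ≤ ε :=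
  Real.iSup_le (fun k => Real.iSup_le (fun hk => h k (Finset.mem_range.mp hk)) hε) hε

lemma IsDynSeparated.filter {E : Finset X} (hE : IsDynSeparated T n ε E) (p : X → Prop)
    [DecidablePred p] : IsDynSeparated T n ε (E.filter p) :=
  fun x hx y hy => hE x (Finset.mem_of_mem_filter x hx) y (Finset.mem_of_mem_filter y hy)

lemma isDynSeparated_singleton (x : X) : IsDynSeparated T n ε {x} := by
  simp [IsDynSeparated]

variable [CompactSpace X]

/-- Coding each point by the `ε/2`-ball of a finite cover that contains `T^k x`, `k < n`, is
injective on an `(n, ε)`-separated set. -/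
lemma exists_card_le_of_isDynSeparated (T : X → X) (n : ℕ) (hε : 0 < ε) :
    ∃ N : ℕ, ∀ E : Finset X, IsDynSeparated T n ε E → E.card ≤ N := by
  obtain ⟨t, -, hcover⟩ := isCompact_univ.elim_nhds_subcover (fun x : X => Metric.ball x (ε / 2))
    fun x _ => Metric.ball_mem_nhds x (half_pos hε)
  have hcenter : ∀ z : X, ∃ c : t, z ∈ Metric.ball (c : X) (ε / 2) := fun z => by
    simpa using hcover (mem_univ z)
  choose c hc using hcenter
  refine ⟨Fintype.card (Fin n → t), fun E hE => Finset.card_le_card_of_injOn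
    (fun x (k : Fin n) => c (T^[k] x)) (fun _ _ => Finset.mem_coe.2 (Finset.mem_univ _)) ?_⟩
  intro x hx y hy hxy
  by_contra hne
  refine (hE x hx y hy hne).not_ge (dynDist_le_of_forall_dist_le hε.le fun k hk => ?_)
  have hk : c (T^[k] x) = c (T^[k] y) := congrFun hxy ⟨k, hk⟩
  have hx' := hc (T^[k] x)
  have hy' := hc (T^[k] y)
  rw [hk, Metric.mem_ball] at hx'
  rw [Metric.mem_ball, dist_comm] at hy'
  linarith [dist_triangle (T^[k] x) (c (T^[k] y)) (T^[k] y)]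

lemma card_le_sepNum (hε : 0 < ε) {K : Set X} {E : Finset X} (hEK : ↑E ⊆ K)
    (hE : IsDynSeparated T n ε E) : E.card ≤ sepNum T n K ε := by
  obtain ⟨N, hN⟩ := exists_card_le_of_isDynSeparated T n hε
  exact le_csSup ⟨N, fun _ ⟨E', _, hE', hcard⟩ => hcard ▸ hN E' hE'⟩ ⟨E, hEK, hE, rfl⟩

lemma sepNum_ne_zero (hε : 0 < ε) {K : Set X} (hK : K.Nonempty) : sepNum T n K ε ≠ 0 := by
  obtain ⟨x, hx⟩ := hK
  exact Nat.one_le_iff_ne_zero.1 <|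
    card_le_sepNum (E := {x}) hε (by simpa using hx) (isDynSeparated_singleton x)

lemma sepNum_le_sum_of_subset_iUnion (hε : 0 < ε) {ι : Type*} (t : Finset ι) (K : ι → Set X)
    {L : Set X} (hL : L ⊆ ⋃ i ∈ t, K i) :
    sepNum T n L ε ≤ ∑ i ∈ t, sepNum T n (K i) ε := by
  classical
  refine csSup_le ⟨0, ∅, by simp, by simp, rfl⟩ ?_
  rintro m ⟨E, hEL, hE, rfl⟩
  have hE_sub : E ⊆ t.biUnion fun i => E.filter (· ∈ K i) := fun e he => by
    simpa [he] using hL (hEL he)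
  refine (Finset.card_le_card hE_sub).trans (Finset.card_biUnion_le.trans ?_)
  exact Finset.sum_le_sum fun i _ =>
    card_le_sepNum hε (fun e he => (Finset.mem_filter.1 he).2) (IsDynSeparated.filter hE _)

end SeparatedSets

section Entropy

variable [MetricSpace X] {T : X → X} {ε : ℝ}

lemma expGrowthSup_sepNum_le_sepEnt (K : Set X) :
    expGrowthSup (fun n => (sepNum T n K ε : ℝ≥0∞)) ≤ sepEnt T K ε :=
  limsup_le_limsup (Eventually.of_forall fun n => ENNReal.log_natCast_div_le _ n)

variable [CompactSpace X]

lemma sepEnt_eq_expGrowthSup_sepNum (hε : 0 < ε) {K : Set X} (hK : K.Nonempty) :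
    sepEnt T K ε = expGrowthSup (fun n => (sepNum T n K ε : ℝ≥0∞)) := by
  simp only [sepEnt, expGrowthSup, ENNReal.log_natCast_div (sepNum_ne_zero hε hK)]

lemma sepEnt_le_biSup_of_subset_iUnion (hε : 0 < ε) {ι : Type*} (t : Finset ι)
    (K : ι → Set X) {L : Set X} (hL : L.Nonempty) (hLK : L ⊆ ⋃ i ∈ t, K i) :
    sepEnt T L ε ≤ ⨆ i ∈ t, sepEnt T (K i) ε :=
  calc sepEnt T L ε = expGrowthSup (fun n => (sepNum T n L ε : ℝ≥0∞)) :=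
        sepEnt_eq_expGrowthSup_sepNum hε hL
    _ ≤ expGrowthSup (∑ i ∈ t, fun n => (sepNum T n (K i) ε : ℝ≥0∞)) :=
        expGrowthSup_monotone fun n => by
          simpa only [Finset.sum_apply, Nat.cast_sum] using
            (Nat.cast_le (α := ℝ≥0∞)).2 (sepNum_le_sum_of_subset_iUnion hε t K hLK)
    _ = ⨆ i ∈ t, expGrowthSup (fun n => (sepNum T n (K i) ε : ℝ≥0∞)) := expGrowthSup_sum _ _
    _ ≤ ⨆ i ∈ t, sepEnt T (K i) ε :=
        iSup₂_mono fun i _ => expGrowthSup_sepNum_le_sepEnt (K i)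

lemma sepEnt_univ_eq_iSup_locEnt [Nonempty X] (T : X → X) (hε : 0 < ε) :
    sepEnt T univ ε = ⨆ x : X, locEnt T x ε := by
  refine le_antisymm (le_of_forall_gt_imp_ge_of_dense fun b hb => ?_)
    (iSup_le fun x => iInf₂_le univ ⟨isClosed_univ, univ_mem⟩)
  have hK : ∀ x : X, ∃ K ∈ {K : Set X | IsClosed K ∧ K ∈ 𝓝 x}, sepEnt T K ε < b := fun x => by
    simpa only [locEnt, iInf_lt_iff, exists_prop] using (le_iSup (locEnt T · ε) x).trans_lt hb
  choose K hK hKb using hK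
  obtain ⟨t, ht⟩ := isCompact_univ.elim_finite_subcover (fun x => interior (K x))
    (fun _ => isOpen_interior) fun x _ => mem_iUnion.2 ⟨x, mem_interior_iff_mem_nhds.2 (hK x).2⟩
  calc sepEnt T univ ε ≤ ⨆ x ∈ t, sepEnt T (K x) ε :=
        sepEnt_le_biSup_of_subset_iUnion hε t K univ_nonempty
          (ht.trans (iUnion₂_mono fun x _ => interior_subset))
    _ ≤ b := iSup₂_le fun x _ => (hKb x).le

end Entropy

section Theorems

variable [MetricSpace X] [CompactSpace X] [Nonempty X] [MeasurableSpace X] [BorelSpace X]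

theorem lower_mdim_eq_liminf_locEnt_general (T : X → X) :
    mdimLower T = liminf (fun ε : ℝ =>
      (⨆ x : X, locEnt T x ε) / ((Real.log (1 / ε) : ℝ) : EReal)) (𝓝[>] (0:ℝ)) := by
  refine liminf_congr ?_
  filter_upwards [self_mem_nhdsWithin] with ε hε
  rw [sepEnt_univ_eq_iSup_locEnt T hε]

/-- The lower metric mean dimension in terms of the local entropy function
(Theorem 7.1). -/
theorem lower_mdim_eq_liminf_locEnt (T : X → X) (hT : IsHomeomorph T) :
    mdimLower T = liminf (fun ε : ℝ =>
      (⨆ x : X, locEnt T x ε) / ((Real.log (1 / ε) : ℝ) : EReal)) (𝓝[>] (0:ℝ)) :=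
  lower_mdim_eq_liminf_locEnt_general T

end Theorems
end
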